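/- There is a constant C = C(Δ) such that for every small enough h > 0, the infimum over y ∈ W^{2,2}(B₁; ℝ³) of I_{h,Δ}(y) = ∫_{B₁}(|DyᵀDy − g_Δ|² + h²|D²y|²) dx is at most 2πΔ²h²(|log h| + C). -/

import Mathlib

/-!
Smooth the cone tip on scale `h`: `y_h(x) = √(1−Δ²) x + Δ √(|x|² + h²) e₃`. Its induced metric is
`(1−Δ²) Id + Δ² x ⊗ x / (|x|² + h²)`, while `g_Δ = (1−Δ²) Id + Δ² x ⊗ x / |x|²`, so the membrane
density is `Δ⁴h⁴/(|x|²+h²)²`; the bending density is `Δ²((|x|²+h²)² + h⁴)/(|x|²+h²)³`. Both are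
radial, and in polar coordinates the term `h²Δ²/(r²+h²)` of the bending energy integrates to
`2πΔ²h² (|log h| + O(1))`, while all other terms are `O(Δ²h²)`.
-/
open MeasureTheory Metric

noncomputable section

abbrev E2 : Type := EuclideanSpace ℝ (Fin 2)
abbrev E3 : Type := EuclideanSpace ℝ (Fin 3)

def e2 (i : Fin 2) : E2 := EuclideanSpace.single i (1 : ℝ)

/-- The components of `x̂⊥ = (−x₂, x₁)/|x|`. -/
noncomputable def perpHat (x : E2) (i : Fin 2) : ℝ :=
  (if i = 0 then -(x 1) else x 0) / ‖x‖

/-- Entry `(i,j)` of the singular cone metric `g_Δ = Id − Δ² x̂⊥ ⊗ x̂⊥`. -/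
noncomputable def gDelta (Δ : ℝ) (x : E2) (i j : Fin 2) : ℝ :=
  (if i = j then (1 : ℝ) else 0) - Δ ^ 2 * perpHat x i * perpHat x j

/-- Membrane energy density `|DyᵀDy − g_Δ|²` (squared Frobenius norm). -/
noncomputable def memb (Δ : ℝ) (y : E2 → E3) (x : E2) : ℝ :=
  ∑ i, ∑ j, ((inner ℝ (fderiv ℝ y x (e2 i)) (fderiv ℝ y x (e2 j)) : ℝ) - gDelta Δ x i j) ^ 2

/-- Bending energy density `|D²y|²` (squared Frobenius norm of all second
partial derivatives of all three components). -/
noncomputable def bend (y : E2 → E3) (x : E2) : ℝ :=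
  ∑ i, ∑ j, ‖fderiv ℝ (fun z => fderiv ℝ y z (e2 i)) x (e2 j)‖ ^ 2

/-- The geometrically nonlinear free elastic energy
`I_{h,Δ}(y) = ∫_{B₁} (|DyᵀDy − g_Δ|² + h²|D²y|²) dx`. -/
noncomputable def Ienergy (h Δ : ℝ) (y : E2 → E3) : ℝ :=
  ∫ x in ball (0 : E2) 1, (memb Δ y x + h ^ 2 * bend y x)


/-- The singular cone `y^Δ(x) = √(1−Δ²) x + Δ|x| e₃`. -/
noncomputable def yCone (Δ : ℝ) (x : E2) : E3 :=
  (WithLp.equiv 2 (Fin 3 → ℝ)).symm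
    ![Real.sqrt (1 - Δ ^ 2) * x 0, Real.sqrt (1 - Δ ^ 2) * x 1, Δ * ‖x‖]

namespace SmoothedCone

open scoped RealInnerProductSpace

section Height

variable {E : Type*} [NormedAddCommGroup E] {h : ℝ}

def height (h : ℝ) (x : E) : ℝ := √(‖x‖ ^ 2 + h ^ 2)

lemma height_pos (hh : h ≠ 0) (x : E) : 0 < height h x :=
  Real.sqrt_pos.2 (by positivity)

lemma height_sq (x : E) : height h x ^ 2 = ‖x‖ ^ 2 + h ^ 2 :=
  Real.sq_sqrt (by positivity)

variable [InnerProductSpace ℝ E]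

lemma hasFDerivAt_height (hh : h ≠ 0) (x : E) :
    HasFDerivAt (height h) ((height h x)⁻¹ • innerSL ℝ x) x := by
  convert ((hasStrictFDerivAt_norm_sq x).hasFDerivAt.add_const (h ^ 2)).sqrt
    (by positivity) using 1
  · rfl
  rw [← Nat.cast_smul_eq_nsmul ℝ, smul_smul]
  congr 1
  have := (height_pos hh x).ne'
  simp only [height] at this ⊢
  field_simp
  norm_num

lemma contDiff_height (hh : h ≠ 0) : ContDiff ℝ 2 (height h : E → ℝ) :=
  ((contDiff_norm_sq ℝ).add contDiff_const).sqrt fun x => by positivity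

end Height

def e3 (k : Fin 3) : E3 := EuclideanSpace.single k 1

def planeEmbed : E2 →L[ℝ] E3 :=
  ∑ i : Fin 2, (EuclideanSpace.proj i : E2 →L[ℝ] ℝ).smulRight (e3 i.castSucc)

def smoothedCone (Δ h : ℝ) (x : E2) : E3 :=
  √(1 - Δ ^ 2) • planeEmbed x + (Δ * height h x) • e3 2

lemma inner_e3 (k l : Fin 3) : ⟪e3 k, e3 l⟫ = if k = l then 1 else 0 := by
  simp [e3, EuclideanSpace.inner_single_left]

lemma planeEmbed_e2 (i : Fin 2) : planeEmbed (e2 i) = e3 i.castSucc := by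
  fin_cases i <;> simp [planeEmbed, e2, Fin.sum_univ_two]

lemma inner_e2 (x : E2) (i : Fin 2) : ⟪x, e2 i⟫ = x i := by
  simp [e2, EuclideanSpace.inner_single_right]

variable {Δ h : ℝ}

lemma hasFDerivAt_smoothedCone (hh : h ≠ 0) (x : E2) :
    HasFDerivAt (smoothedCone Δ h)
      (√(1 - Δ ^ 2) • planeEmbed + (Δ • (height h x)⁻¹ • innerSL ℝ x).smulRight (e3 2)) x :=
  (planeEmbed.hasFDerivAt.const_smul √(1 - Δ ^ 2)).add
    (((hasFDerivAt_height hh x).const_mul Δ).smul_const (e3 2))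

lemma fderiv_smoothedCone_e2 (hh : h ≠ 0) (x : E2) (i : Fin 2) :
    fderiv ℝ (smoothedCone Δ h) x (e2 i)
      = √(1 - Δ ^ 2) • e3 i.castSucc + (Δ * (x i / height h x)) • e3 2 := by
  simp [(hasFDerivAt_smoothedCone hh x).fderiv, planeEmbed_e2, inner_e2, div_eq_inv_mul]

lemma contDiff_smoothedCone (hh : h ≠ 0) : ContDiff ℝ 2 (smoothedCone Δ h) :=
  (planeEmbed.contDiff.const_smul _).add
    ((contDiff_const.mul (contDiff_height hh)).smul contDiff_const)

lemma norm_sq_E2 (x : E2) : ‖x‖ ^ 2 = x 0 ^ 2 + x 1 ^ 2 := by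
  simp [EuclideanSpace.real_norm_sq_eq, Fin.sum_univ_two]

lemma inner_fderiv_smoothedCone (hΔ : Δ ^ 2 ≤ 1) (hh : h ≠ 0) (x : E2) (i j : Fin 2) :
    ⟪fderiv ℝ (smoothedCone Δ h) x (e2 i), fderiv ℝ (smoothedCone Δ h) x (e2 j)⟫
      = (1 - Δ ^ 2) * (if i = j then 1 else 0) + Δ ^ 2 * (x i * x j) / (‖x‖ ^ 2 + h ^ 2) := by
  have hs := (height_pos hh x).ne'
  have h2 (k : Fin 2) : k.castSucc ≠ 2 := Fin.castSucc_ne_last k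
  simp only [fderiv_smoothedCone_e2 hh, inner_add_left, inner_add_right, real_inner_smul_left,
    real_inner_smul_right, inner_e3, Fin.castSucc_inj, h2, (h2 _).symm, if_true, if_false,
    ← height_sq]
  rw [← mul_assoc, Real.mul_self_sqrt (by linarith)]
  field_simp
  ring

lemma gDelta_eq (x : E2) (hx : x ≠ 0) (i j : Fin 2) :
    gDelta Δ x i j = (1 - Δ ^ 2) * (if i = j then 1 else 0) + Δ ^ 2 * (x i * x j) / ‖x‖ ^ 2 := by
  have hx : ‖x‖ ≠ 0 := norm_ne_zero_iff.2 hx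
  have hn := norm_sq_E2 x
  fin_cases i <;> fin_cases j <;> simp [gDelta, perpHat] <;> field_simp <;>
    linear_combination Δ ^ 2 * hn

lemma memb_smoothedCone (hΔ : Δ ^ 2 ≤ 1) (hh : h ≠ 0) (x : E2) (hx : x ≠ 0) :
    memb Δ (smoothedCone Δ h) x = Δ ^ 4 * h ^ 4 / (‖x‖ ^ 2 + h ^ 2) ^ 2 := by
  have hr : ‖x‖ ≠ 0 := norm_ne_zero_iff.2 hx
  have hq : ‖x‖ ^ 2 + h ^ 2 ≠ 0 := by positivity
  have hn := norm_sq_E2 x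
  simp only [memb, inner_fderiv_smoothedCone hΔ hh, gDelta_eq x hx, add_sub_add_left_eq_sub,
    Fin.sum_univ_two]
  field_simp
  rw [show ‖x‖ ^ 4 = (‖x‖ ^ 2) ^ 2 by ring, hn]
  ring

lemma fderiv_partial_smoothedCone (hh : h ≠ 0) (x : E2) (i j : Fin 2) :
    fderiv ℝ (fun z => fderiv ℝ (smoothedCone Δ h) z (e2 i)) x (e2 j)
      = (Δ * ((if i = j then 1 else 0) / height h x - x i * x j / height h x ^ 3)) • e3 2 := by
  have hs := (height_pos hh x).ne'
  have hpartial : (fun z => fderiv ℝ (smoothedCone Δ h) z (e2 i))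
      = fun z => √(1 - Δ ^ 2) • e3 i.castSucc + (Δ * (z i * (height h z)⁻¹)) • e3 2 :=
    funext fun z => by rw [fderiv_smoothedCone_e2 hh z i, div_eq_mul_inv]
  have hquot : HasFDerivAt (fun z : E2 => z i * (height h z)⁻¹) _ x :=
    (EuclideanSpace.proj i : E2 →L[ℝ] ℝ).hasFDerivAt.mul
      ((hasDerivAt_inv hs).comp_hasFDerivAt x (hasFDerivAt_height hh x))
  rw [hpartial, (((hquot.const_mul Δ).smul_const (e3 2)).const_add _).fderiv]
  simp [e2, EuclideanSpace.inner_single_right]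
  congr 1
  split_ifs <;> field_simp <;> ring

lemma bend_smoothedCone (hh : h ≠ 0) (x : E2) :
    bend (smoothedCone Δ h) x
      = Δ ^ 2 * ((‖x‖ ^ 2 + h ^ 2) ^ 2 + h ^ 4) / (‖x‖ ^ 2 + h ^ 2) ^ 3 := by
  have hs := (height_pos hh x).ne'
  have hq := height_sq (h := h) x
  simp only [bend, fderiv_partial_smoothedCone hh, norm_smul, e3, PiLp.norm_single, norm_one,
    mul_one, Real.norm_eq_abs, sq_abs, Fin.sum_univ_two]
  have hh2 : h ^ 4 = (height h x ^ 2 - (x 0 ^ 2 + x 1 ^ 2)) ^ 2 := by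
    rw [hq, norm_sq_E2]; ring
  rw [← hq, hh2]
  norm_num
  field_simp
  ring

def energyDensity (Δ h r : ℝ) : ℝ :=
  Δ ^ 4 * h ^ 4 / (r ^ 2 + h ^ 2) ^ 2
    + h ^ 2 * (Δ ^ 2 * ((r ^ 2 + h ^ 2) ^ 2 + h ^ 4) / (r ^ 2 + h ^ 2) ^ 3)

lemma Ienergy_smoothedCone (hΔ : Δ ^ 2 ≤ 1) (hh : h ≠ 0) :
    Ienergy h Δ (smoothedCone Δ h) = ∫ x in ball (0 : E2) 1, energyDensity Δ h ‖x‖ := by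
  refine setIntegral_congr_ae measurableSet_ball ?_
  filter_upwards [measure_singleton (μ := (volume : Measure E2)) 0 |> compl_mem_ae_iff.2]
    with x hx _
  rw [memb_smoothedCone hΔ hh x hx, bend_smoothedCone hh, energyDensity]

lemma setIntegral_ball_fun_norm {R : ℝ} (hR : 0 ≤ R) (f : ℝ → ℝ) :
    ∫ x in ball (0 : E2) R, f ‖x‖ = 2 * Real.pi * ∫ r in (0 : ℝ)..R, r * f r := by
  have hball : (ball (0 : E2) R).indicator (fun x => f ‖x‖)
      = fun x => (Set.Iio R).indicator f ‖x‖ := by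
    ext x
    by_cases hx : ‖x‖ < R <;> simp [hx]
  have hradial (r : ℝ) : r ^ (2 - 1) • (Set.Iio R).indicator f r
      = (Set.Iio R).indicator (fun r => r * f r) r := by
    simp [Set.indicator_apply]
  rw [← integral_indicator measurableSet_ball, hball, integral_fun_norm_addHaar volume,
    finrank_euclideanSpace, Fintype.card_fin]
  simp_rw [hradial]
  rw [setIntegral_indicator measurableSet_Iio, Set.Ioi_inter_Iio, ← integral_Ioc_eq_integral_Ioo,
    ← intervalIntegral.integral_of_le hR, measureReal_def]
  simp only [EuclideanSpace.volume_ball_fin_two, ENNReal.ofReal_one, one_pow, one_mul,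
    ENNReal.toReal_ofReal Real.pi_nonneg, nsmul_eq_mul, smul_eq_mul]
  push_cast
  ring

def energyPrimitive (Δ h r : ℝ) : ℝ :=
  -(Δ ^ 4 * h ^ 4) / (2 * (r ^ 2 + h ^ 2))
    + h ^ 2 * Δ ^ 2 * (Real.log (r ^ 2 + h ^ 2) / 2 - h ^ 4 / (4 * (r ^ 2 + h ^ 2) ^ 2))

lemma hasDerivAt_energyPrimitive (hh : h ≠ 0) (r : ℝ) :
    HasDerivAt (energyPrimitive Δ h) (r * energyDensity Δ h r) r := by
  have hq0 : r ^ 2 + h ^ 2 ≠ 0 := by positivity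
  have hq : HasDerivAt (fun r : ℝ => r ^ 2 + h ^ 2) (2 * r) r := by
    simpa using (hasDerivAt_pow 2 r).add_const (h ^ 2)
  have hmemb := (hasDerivAt_const r (-(Δ ^ 4 * h ^ 4))).div (hq.const_mul 2) (by positivity)
  have hlog := (hq.log hq0).div_const 2
  have hcubic := (hasDerivAt_const r (h ^ 4)).div ((hq.pow 2).const_mul 4)
    (mul_ne_zero four_ne_zero (pow_ne_zero 2 hq0))
  refine (hmemb.add ((hlog.sub hcubic).const_mul (h ^ 2 * Δ ^ 2))).congr_deriv ?_
  simp only [energyDensity, Pi.pow_apply]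
  field_simp
  ring

lemma integral_mul_energyDensity (hh : h ≠ 0) :
    ∫ r in (0 : ℝ)..1, r * energyDensity Δ h r = energyPrimitive Δ h 1 - energyPrimitive Δ h 0 := by
  refine intervalIntegral.integral_eq_sub_of_hasDerivAt
    (fun r _ => hasDerivAt_energyPrimitive hh r) (Continuous.intervalIntegrable ?_ _ _)
  unfold energyDensity
  fun_prop (disch := intros; positivity)

lemma energyPrimitive_zero (hh : h ≠ 0) :
    energyPrimitive Δ h 0 = -(Δ ^ 4 * h ^ 2) / 2 + h ^ 2 * Δ ^ 2 * (Real.log h - 1 / 4) := by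
  simp only [energyPrimitive, zero_pow two_ne_zero, zero_add, Real.log_pow]
  field_simp
  ring

lemma energyPrimitive_one_le (h1 : h ^ 2 ≤ 1) :
    energyPrimitive Δ h 1 ≤ h ^ 2 * Δ ^ 2 / 2 := by
  simp only [energyPrimitive, one_pow]
  have hlog : Real.log (1 + h ^ 2) ≤ 1 := by
    linarith [Real.log_le_sub_one_of_pos (show (0 : ℝ) < 1 + h ^ 2 by positivity)]
  have hmemb : -(Δ ^ 4 * h ^ 4) / (2 * (1 + h ^ 2)) ≤ 0 :=
    div_nonpos_of_nonpos_of_nonneg (neg_nonpos.2 (by positivity)) (by positivity)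
  have hcubic : 0 ≤ h ^ 4 / (4 * (1 + h ^ 2) ^ 2) := by positivity
  have hbend := mul_le_mul_of_nonneg_left
    (show Real.log (1 + h ^ 2) / 2 - h ^ 4 / (4 * (1 + h ^ 2) ^ 2) ≤ 1 / 2 by linarith)
    (show 0 ≤ h ^ 2 * Δ ^ 2 by positivity)
  linarith

lemma energyPrimitive_sub_le (hΔ : Δ ^ 2 ≤ 1) (h0 : 0 < h) (h1 : h ≤ 1) :
    energyPrimitive Δ h 1 - energyPrimitive Δ h 0 ≤ Δ ^ 2 * h ^ 2 * (|Real.log h| + 2) := by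
  have hscale : 0 ≤ h ^ 2 * Δ ^ 2 := by positivity
  have hmemb : Δ ^ 4 * h ^ 2 ≤ Δ ^ 2 * h ^ 2 :=
    mul_le_mul_of_nonneg_right (by nlinarith [sq_nonneg Δ]) (sq_nonneg h)
  have hlog := mul_le_mul_of_nonneg_left (neg_le_abs (Real.log h)) hscale
  have hone := energyPrimitive_one_le (Δ := Δ) (by nlinarith : h ^ 2 ≤ 1)
  rw [energyPrimitive_zero h0.ne']
  linarith

end SmoothedCone

/-- The infimum over `W^{2,2}(B₁;ℝ³)` is bounded by exhibiting a `C²` competitor. -/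
theorem stmt7 (Δ : ℝ) (hΔ : Δ ∈ Set.Ioo (0 : ℝ) 1) :
    ∃ C : ℝ, 0 < C ∧ ∃ h₀ : ℝ, 0 < h₀ ∧ ∀ h : ℝ, 0 < h → h < h₀ →
      ∃ y : E2 → E3, ContDiff ℝ 2 y ∧
        Ienergy h Δ y ≤ 2 * Real.pi * Δ ^ 2 * h ^ 2 * (|Real.log h| + C) := by
  open SmoothedCone in
  have hΔ2 : Δ ^ 2 ≤ 1 := by nlinarith [hΔ.1, hΔ.2]
  refine ⟨2, two_pos, 1, one_pos, fun h h0 h1 => ?_⟩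
  refine ⟨smoothedCone Δ h, contDiff_smoothedCone h0.ne', ?_⟩
  rw [Ienergy_smoothedCone hΔ2 h0.ne', setIntegral_ball_fun_norm zero_le_one,
    integral_mul_energyDensity h0.ne']
  calc 2 * Real.pi * (energyPrimitive Δ h 1 - energyPrimitive Δ h 0)
      ≤ 2 * Real.pi * (Δ ^ 2 * h ^ 2 * (|Real.log h| + 2)) := by
        gcongr; exact energyPrimitive_sub_le hΔ2 h0 h1.le
    _ = 2 * Real.pi * Δ ^ 2 * h ^ 2 * (|Real.log h| + 2) := by ring
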